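/- arXiv:1804.06539 — 8 statements merged into one kernel-verified Lean document; each statement's English description precedes it below -/
import Mathlib

section
/- Let z be a point at which g₀ and all g_i are differentiable, let r > 0, and let d* minimize L_z over the closed ball {d ∈ ℝ^n : ‖d‖ ≤ r}. If the predicted cost reduction vanishes, i.e. J(z) − L_z(d*) = 0, then d = 0 is a global minimizer of L_z: L_z(d) ≥ J(z) for every d ∈ ℝ^n. -/
/-!
The linearized cost `L_z` is convex (an affine term plus nonnegative multiples of `|·|` and
`max 0 ·` composed with affine maps) and `L_z 0 = J z`. If `J z = L_z d*`, then `0` minimizes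
`L_z` on the ball of radius `r > 0`, so it is a local minimum of a convex function, hence a
global one.
-/

open RealInnerProductSpace Metric Filter Topology Asymptotics

noncomputable def Jpen {n : ℕ} {ι : Type*} (E I : Finset ι)
    (g₀ : EuclideanSpace ℝ (Fin n) → ℝ) (g : ι → EuclideanSpace ℝ (Fin n) → ℝ)
    (lam : ι → ℝ) (z : EuclideanSpace ℝ (Fin n)) : ℝ :=
  g₀ z + ∑ i ∈ E, lam i * |g i z| + ∑ i ∈ I, lam i * max 0 (g i z)

noncomputable def Lpen {n : ℕ} {ι : Type*} (E I : Finset ι)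
    (g₀ : EuclideanSpace ℝ (Fin n) → ℝ) (g : ι → EuclideanSpace ℝ (Fin n) → ℝ)
    (lam : ι → ℝ) (z d : EuclideanSpace ℝ (Fin n)) : ℝ :=
  g₀ z + ⟪gradient g₀ z, d⟫ +
    ∑ i ∈ E, lam i * |g i z + ⟪gradient (g i) z, d⟫| +
    ∑ i ∈ I, lam i * max 0 (g i z + ⟪gradient (g i) z, d⟫)

open Set

theorem ConvexOn.finset_sum {𝕜 E β ι : Type*} [Semiring 𝕜] [PartialOrder 𝕜] [AddCommMonoid E]
    [AddCommMonoid β] [PartialOrder β] [IsOrderedAddMonoid β] [SMul 𝕜 E] [Module 𝕜 β]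
    {s : Set E} (hs : Convex 𝕜 s) {t : Finset ι} {f : ι → E → β}
    (hf : ∀ i ∈ t, ConvexOn 𝕜 s (f i)) : ConvexOn 𝕜 s fun x => ∑ i ∈ t, f i x := by
  classical
  induction t using Finset.induction_on with
  | empty => simpa using convexOn_const (0 : β) hs
  | insert j t hj ih =>
    simp only [Finset.sum_insert hj]
    exact (hf j (Finset.mem_insert_self j t)).add
      (ih fun i hi => hf i (Finset.mem_insert_of_mem hi))

theorem convexOn_univ_abs : ConvexOn ℝ univ fun x : ℝ => |x| :=
  convexOn_norm (E := ℝ) convex_univ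

theorem convexOn_univ_max_zero : ConvexOn ℝ univ fun x : ℝ => max 0 x :=
  (convexOn_const 0 convex_univ).sup (convexOn_id convex_univ)

theorem ConvexOn.comp_const_add_inner {V : Type*} [NormedAddCommGroup V] [InnerProductSpace ℝ V]
    {φ : ℝ → ℝ} (hφ : ConvexOn ℝ univ φ) (c : ℝ) (v : V) :
    ConvexOn ℝ univ fun d => φ (c + ⟪v, d⟫) :=
  hφ.comp_affineMap (AffineMap.const ℝ V c + (innerₛₗ ℝ v).toAffineMap)

theorem convexOn_Lpen {n : ℕ} {ι : Type*} (E I : Finset ι)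
    (g₀ : EuclideanSpace ℝ (Fin n) → ℝ) (g : ι → EuclideanSpace ℝ (Fin n) → ℝ)
    {lam : ι → ℝ} (hE : ∀ i ∈ E, 0 ≤ lam i) (hI : ∀ i ∈ I, 0 ≤ lam i)
    (z : EuclideanSpace ℝ (Fin n)) :
    ConvexOn ℝ univ (Lpen E I g₀ g lam z) := by
  refine (((convexOn_id convex_univ).comp_const_add_inner _ _).add ?_).add ?_
  · exact ConvexOn.finset_sum convex_univ fun i hi =>
      (convexOn_univ_abs.comp_const_add_inner _ _).smul (hE i hi)
  · exact ConvexOn.finset_sum convex_univ fun i hi =>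
      (convexOn_univ_max_zero.comp_const_add_inner _ _).smul (hI i hi)

theorem Lpen_zero {n : ℕ} {ι : Type*} (E I : Finset ι)
    (g₀ : EuclideanSpace ℝ (Fin n) → ℝ) (g : ι → EuclideanSpace ℝ (Fin n) → ℝ)
    (lam : ι → ℝ) (z : EuclideanSpace ℝ (Fin n)) :
    Lpen E I g₀ g lam z 0 = Jpen E I g₀ g lam z := by
  simp [Lpen, Jpen]

theorem stmt1_general {n : ℕ} {ι : Type*} [DecidableEq ι] (E I : Finset ι)
    (g₀ : EuclideanSpace ℝ (Fin n) → ℝ) (g : ι → EuclideanSpace ℝ (Fin n) → ℝ)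
    (lam : ι → ℝ) (hlam : ∀ i ∈ E ∪ I, 0 ≤ lam i)
    (z : EuclideanSpace ℝ (Fin n))
    (r : ℝ) (hr : 0 < r)
    (dstar : EuclideanSpace ℝ (Fin n))
    (hmin : IsMinOn (Lpen E I g₀ g lam z) (closedBall 0 r) dstar)
    (hzero : Jpen E I g₀ g lam z - Lpen E I g₀ g lam z dstar = 0) :
    ∀ d : EuclideanSpace ℝ (Fin n), Lpen E I g₀ g lam z d ≥ Jpen E I g₀ g lam z := by
  intro d
  have hmin0 : IsMinOn (Lpen E I g₀ g lam z) (closedBall 0 r) 0 := fun x hx => by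
    simpa [Lpen_zero, sub_eq_zero.mp hzero] using hmin hx
  have hconv := convexOn_Lpen E I g₀ g (fun i hi => hlam i (Finset.mem_union_left I hi))
    (fun i hi => hlam i (Finset.mem_union_right E hi)) z
  rw [ge_iff_le, ← Lpen_zero E I g₀ g lam z]
  exact IsMinOn.of_isLocalMin_of_convex_univ
    (hmin0.isLocalMin (closedBall_mem_nhds 0 hr)) hconv d

theorem stmt1 {n : ℕ} {ι : Type*} [DecidableEq ι] (E I : Finset ι) (hEI : Disjoint E I)
    (g₀ : EuclideanSpace ℝ (Fin n) → ℝ) (g : ι → EuclideanSpace ℝ (Fin n) → ℝ)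
    (lam : ι → ℝ) (hlam : ∀ i ∈ E ∪ I, 0 ≤ lam i)
    (z : EuclideanSpace ℝ (Fin n))
    (hg₀ : DifferentiableAt ℝ g₀ z) (hg : ∀ i ∈ E ∪ I, DifferentiableAt ℝ (g i) z)
    (r : ℝ) (hr : 0 < r)
    (dstar : EuclideanSpace ℝ (Fin n)) (hdstar : dstar ∈ closedBall (0 : EuclideanSpace ℝ (Fin n)) r)
    (hmin : IsMinOn (Lpen E I g₀ g lam z) (closedBall 0 r) dstar)
    (hzero : Jpen E I g₀ g lam z - Lpen E I g₀ g lam z dstar = 0) :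
    ∀ d : EuclideanSpace ℝ (Fin n), Lpen E I g₀ g lam z d ≥ Jpen E I g₀ g lam z :=
  stmt1_general E I g₀ g lam hlam z r hr dstar hmin hzero
end

section
/- Let z be a point at which g₀ and all g_i (i ∈ E ∪ I) are (Fréchet) differentiable. Then the linearization error of the penalized cost is of higher order: the function d ↦ J(z + d) − L_z(d) is o(‖d‖) as d → 0; that is, (J(z + d) − L_z(d)) / ‖d‖ → 0 as d → 0. -/
open RealInnerProductSpace Metric Filter Topology Asymptotics

/-!
Each summand of `J` is a Lipschitz function (`id`, `|·|` or `max 0`) of one of the `g_i`, and `L_z`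
applies the same function to the first-order Taylor polynomial of `g_i`. A Lipschitz map changes a
difference by at most a constant factor, so every summand of `J(z + d) - L_z(d)` is bounded by a
multiple of the Taylor remainder of some `g_i`, which is `o(‖d‖)` by differentiability.
-/

theorem Asymptotics.IsLittleO.lipschitzWith_comp_sub {α E F G : Type*} [SeminormedAddCommGroup E]
    [SeminormedAddCommGroup F] [Norm G] {l : Filter α} {u v : α → E} {k : α → G} {φ : E → F}
    {K : NNReal} (hφ : LipschitzWith K φ) (h : (fun x => u x - v x) =o[l] k) :
    (fun x => φ (u x) - φ (v x)) =o[l] k :=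
  (isBigO_of_le' (c := K) l fun x => by
    simpa only [dist_eq_norm] using hφ.dist_le_mul (u x) (v x)).trans_isLittleO h

section Linearization

variable {F : Type*} [NormedAddCommGroup F] [InnerProductSpace ℝ F] [CompleteSpace F]
  {f : F → ℝ} {z : F}

theorem DifferentiableAt.isLittleO_sub_inner_gradient (hf : DifferentiableAt ℝ f z) :
    (fun d => f (z + d) - (f z + ⟪gradient f z, d⟫)) =o[𝓝 0] fun d => ‖d‖ := by
  have h := (hasFDerivAt_iff_isLittleO_nhds_zero.mp hf.hasGradientAt.hasFDerivAt).norm_right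
  simpa only [InnerProductSpace.toDual_apply_apply, sub_sub] using h

theorem DifferentiableAt.isLittleO_lipschitzWith_comp_sub_inner_gradient {φ : ℝ → ℝ}
    {K : NNReal} (hφ : LipschitzWith K φ) (hf : DifferentiableAt ℝ f z) :
    (fun d => φ (f (z + d)) - φ (f z + ⟪gradient f z, d⟫)) =o[𝓝 0] fun d => ‖d‖ :=
  hf.isLittleO_sub_inner_gradient.lipschitzWith_comp_sub hφ

end Linearization

theorem Real.lipschitzWith_abs : LipschitzWith 1 (abs : ℝ → ℝ) := by
  refine LipschitzWith.of_dist_le_mul fun x y => ?_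
  simpa only [Real.dist_eq, NNReal.coe_one, one_mul] using abs_abs_sub_abs_le_abs_sub x y

theorem Jpen_sub_Lpen {n : ℕ} {ι : Type*} (E I : Finset ι)
    (g₀ : EuclideanSpace ℝ (Fin n) → ℝ) (g : ι → EuclideanSpace ℝ (Fin n) → ℝ)
    (lam : ι → ℝ) (z d : EuclideanSpace ℝ (Fin n)) :
    Jpen E I g₀ g lam (z + d) - Lpen E I g₀ g lam z d =
      (g₀ (z + d) - (g₀ z + ⟪gradient g₀ z, d⟫)) +
        ∑ i ∈ E, lam i * (|g i (z + d)| - |g i z + ⟪gradient (g i) z, d⟫|) +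
        ∑ i ∈ I, lam i * (max 0 (g i (z + d)) - max 0 (g i z + ⟪gradient (g i) z, d⟫)) := by
  simp only [Jpen, Lpen, mul_sub, Finset.sum_sub_distrib]
  ring

theorem stmt3_general {n : ℕ} {ι : Type*} [DecidableEq ι] (E I : Finset ι)
    (g₀ : EuclideanSpace ℝ (Fin n) → ℝ) (g : ι → EuclideanSpace ℝ (Fin n) → ℝ)
    (lam : ι → ℝ)
    (z : EuclideanSpace ℝ (Fin n))
    (hg₀ : DifferentiableAt ℝ g₀ z) (hg : ∀ i ∈ E ∪ I, DifferentiableAt ℝ (g i) z) :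
    (fun d => Jpen E I g₀ g lam (z + d) - Lpen E I g₀ g lam z d) =o[𝓝 0]
      fun d : EuclideanSpace ℝ (Fin n) => ‖d‖ := by
  have hE : ∀ i ∈ E, (fun d => lam i * (|g i (z + d)| - |g i z + ⟪gradient (g i) z, d⟫|))
      =o[𝓝 0] fun d => ‖d‖ := fun i hi =>
    ((hg i (Finset.mem_union_left I hi)).isLittleO_lipschitzWith_comp_sub_inner_gradient
      Real.lipschitzWith_abs).const_mul_left (lam i)
  have hI : ∀ i ∈ I, (fun d => lam i * (max 0 (g i (z + d)) -
      max 0 (g i z + ⟪gradient (g i) z, d⟫))) =o[𝓝 0] fun d => ‖d‖ := fun i hi =>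
    ((hg i (Finset.mem_union_right E hi)).isLittleO_lipschitzWith_comp_sub_inner_gradient
      (LipschitzWith.id.const_max 0)).const_mul_left (lam i)
  simp_rw [Jpen_sub_Lpen]
  simpa only [Finset.sum_apply] using
    (hg₀.isLittleO_sub_inner_gradient.add (IsLittleO.sum hE)).add (IsLittleO.sum hI)

theorem stmt3 {n : ℕ} {ι : Type*} [DecidableEq ι] (E I : Finset ι) (hEI : Disjoint E I)
    (g₀ : EuclideanSpace ℝ (Fin n) → ℝ) (g : ι → EuclideanSpace ℝ (Fin n) → ℝ)
    (lam : ι → ℝ) (hlam : ∀ i ∈ E ∪ I, 0 ≤ lam i)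
    (z : EuclideanSpace ℝ (Fin n))
    (hg₀ : DifferentiableAt ℝ g₀ z) (hg : ∀ i ∈ E ∪ I, DifferentiableAt ℝ (g i) z) :
    (fun d => Jpen E I g₀ g lam (z + d) - Lpen E I g₀ g lam z d) =o[𝓝 0]
      fun d : EuclideanSpace ℝ (Fin n) => ‖d‖ :=
  stmt3_general E I g₀ g lam z hg₀ hg
end

section
/- (Main ratio lemma.) Assume g₀ and all g_i are differentiable with Lipschitz continuous gradients on ℝ^n. Let z̄ ∈ ℝ^n and suppose there exist a unit vector s ∈ ℝ^n, κ > 0, and ε₀ > 0 such that J(z + δ s) − J(z) < −(κ/2)δ for all z with ‖z − z̄‖ < ε₀ and all δ ∈ (0, ε₀]. Then for every c ∈ (0, 1) there exist r̄ > 0 and ε̄ > 0 such that for every z with ‖z − z̄‖ < ε̄, every r ∈ (0, r̄], and every d* minimizing L_z over the closed ball {d : ‖d‖ ≤ r}, one has J(z) − L_z(d*) > 0 and J(z) − J(z + d*) ≥ c · (J(z) − L_z(d*)). -/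
/-!
Up to an error `M‖d‖²`, with `M` built from the Lipschitz constants of the gradients, the
penalized cost at `z + d` agrees with its linearization `L_z(d)`: the smooth parts by the
descent lemma, and the penalty terms because `|·|` and `max 0 ·` are 1-Lipschitz.
Comparing the minimizer `d*` with the competitor `r s` turns the descent hypothesis into
`J(z) - L_z(d*) > κ r / 4`, while the actual and predicted decreases differ by at most `M r²`;
this is at most a `(1 - c)` fraction of the predicted decrease once `M r ≤ (1 - c) κ / 4`.
-/

open RealInnerProductSpace Metric Filter Topology Asymptotics

theorem abs_sub_linearization_le_of_lipschitzWith_gradient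
    {F : Type*} [NormedAddCommGroup F] [InnerProductSpace ℝ F] [CompleteSpace F]
    {f : F → ℝ} (hf : Differentiable ℝ f) {K : NNReal} (hK : LipschitzWith K (gradient f))
    (z d : F) :
    |f (z + d) - (f z + ⟪gradient f z, d⟫)| ≤ K * ‖d‖ ^ 2 := by
  have hz : z ∈ closedBall z ‖d‖ := mem_closedBall_self (norm_nonneg d)
  have hzd : z + d ∈ closedBall z ‖d‖ := by simp [mem_closedBall, dist_eq_norm]
  have hfderiv : ∀ x ∈ closedBall z ‖d‖, ‖fderiv ℝ f x - fderiv ℝ f z‖ ≤ K * ‖d‖ := by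
    intro x hx
    rw [← toDual_gradient, ← toDual_gradient, ← map_sub, LinearIsometryEquiv.norm_map,
      ← dist_eq_norm]
    exact (hK.dist_le_mul x z).trans (mul_le_mul_of_nonneg_left hx K.2)
  have hmvt := (convex_closedBall z ‖d‖).norm_image_sub_le_of_norm_fderiv_le'
    (fun x _ => hf x) hfderiv hz hzd
  rw [add_sub_cancel_left, ← inner_gradient_left, Real.norm_eq_abs] at hmvt
  calc |f (z + d) - (f z + ⟪gradient f z, d⟫)| = |f (z + d) - f z - ⟪gradient f z, d⟫| := by
        rw [sub_sub]
    _ ≤ K * ‖d‖ * ‖d‖ := hmvt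
    _ = K * ‖d‖ ^ 2 := by ring

theorem abs_sum_mul_comp_sub_sum_mul_comp_le {ι : Type*} {s : Finset ι} {w : ι → ℝ}
    (hw : ∀ i ∈ s, 0 ≤ w i) {φ : ℝ → ℝ} (hφ : ∀ x y, |φ x - φ y| ≤ |x - y|) (a b : ι → ℝ) :
    |∑ i ∈ s, w i * φ (a i) - ∑ i ∈ s, w i * φ (b i)| ≤ ∑ i ∈ s, w i * |a i - b i| := by
  rw [← Finset.sum_sub_distrib]
  refine (Finset.abs_sum_le_sum_abs _ _).trans (Finset.sum_le_sum fun i hi => ?_)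
  rw [← mul_sub, abs_mul, abs_of_nonneg (hw i hi)]
  exact mul_le_mul_of_nonneg_left (hφ _ _) (hw i hi)

theorem abs_max_zero_sub_max_zero_le (x y : ℝ) : |max 0 x - max 0 y| ≤ |x - y| := by
  rw [max_comm 0 x, max_comm 0 y]
  exact abs_max_sub_max_le_abs x y 0

theorem IsMinOn.sufficient_decrease_of_abs_sub_le_sq {X : Type*} [SeminormedAddCommGroup X]
    [NormedSpace ℝ X] {J L : X → ℝ} {z s d : X} {M κ r c : ℝ} (hM : 0 ≤ M)
    (herr : ∀ v, |J (z + v) - L v| ≤ M * ‖v‖ ^ 2) (hs : ‖s‖ = 1) (hr : 0 < r) (hκ : 0 < κ)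
    (hc₀ : 0 ≤ c) (hc₁ : c ≤ 1) (hMr : M * r ≤ (1 - c) * κ / 4)
    (hdesc : J (z + r • s) - J z < -(κ / 2) * r) (hd : d ∈ closedBall 0 r)
    (hmin : IsMinOn L (closedBall 0 r) d) :
    0 < J z - L d ∧ J z - J (z + d) ≥ c * (J z - L d) := by
  have hrs : ‖r • s‖ = r := by rw [norm_smul, hs, mul_one, Real.norm_of_nonneg hr.le]
  have hd_le : ‖d‖ ≤ r := mem_closedBall_zero_iff.mp hd
  have hL : L d ≤ L (r • s) := hmin (mem_closedBall_zero_iff.mpr hrs.le)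
  have herr_rs := (abs_le.mp (herr (r • s))).1
  have herr_d := (abs_le.mp (herr d)).2
  rw [hrs] at herr_rs
  have hMr2 : M * r ^ 2 ≤ (1 - c) * κ / 4 * r := by nlinarith
  have hMd2 : M * ‖d‖ ^ 2 ≤ M * r ^ 2 := by gcongr
  have hpredicted : κ / 4 * r < J z - L d := by
    nlinarith [mul_nonneg (mul_nonneg hc₀ hκ.le) hr.le]
  refine ⟨lt_trans (by positivity) hpredicted, ?_⟩
  nlinarith [mul_le_mul_of_nonneg_left hpredicted.le (sub_nonneg.mpr hc₁)]

section Penalty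

variable {n : ℕ} {ι : Type*} [DecidableEq ι] {E I : Finset ι}
  {g₀ : EuclideanSpace ℝ (Fin n) → ℝ} {g : ι → EuclideanSpace ℝ (Fin n) → ℝ} {lam : ι → ℝ}

theorem abs_Jpen_add_sub_Lpen_le (hlam : ∀ i ∈ E ∪ I, 0 ≤ lam i) (hg₀ : Differentiable ℝ g₀)
    {K₀ : NNReal} (hK₀ : LipschitzWith K₀ (gradient g₀)) (hg : ∀ i ∈ E ∪ I, Differentiable ℝ (g i))
    {K : ι → NNReal} (hK : ∀ i ∈ E ∪ I, LipschitzWith (K i) (gradient (g i)))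
    (z d : EuclideanSpace ℝ (Fin n)) :
    |Jpen E I g₀ g lam (z + d) - Lpen E I g₀ g lam z d| ≤
      (K₀ + ∑ i ∈ E, lam i * K i + ∑ i ∈ I, lam i * K i) * ‖d‖ ^ 2 := by
  set a := fun i => g i (z + d)
  set b := fun i => g i z + ⟪gradient (g i) z, d⟫
  have hsum : ∀ s ⊆ E ∪ I, ∑ i ∈ s, lam i * |a i - b i| ≤ (∑ i ∈ s, lam i * K i) * ‖d‖ ^ 2 := by
    intro s hs
    rw [Finset.sum_mul]
    refine Finset.sum_le_sum fun i hi => ?_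
    rw [mul_assoc]
    exact mul_le_mul_of_nonneg_left
      (abs_sub_linearization_le_of_lipschitzWith_gradient (hg i (hs hi)) (hK i (hs hi)) z d)
      (hlam i (hs hi))
  have hsplit : Jpen E I g₀ g lam (z + d) - Lpen E I g₀ g lam z d =
      (g₀ (z + d) - (g₀ z + ⟪gradient g₀ z, d⟫))
      + (∑ i ∈ E, lam i * |a i| - ∑ i ∈ E, lam i * |b i|)
      + (∑ i ∈ I, lam i * max 0 (a i) - ∑ i ∈ I, lam i * max 0 (b i)) := by
    simp only [Jpen, Lpen, a, b]
    ring
  have hlam_E i (hi : i ∈ E) := hlam i (Finset.subset_union_left hi)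
  have hlam_I i (hi : i ∈ I) := hlam i (Finset.subset_union_right hi)
  rw [hsplit]
  calc _ ≤ _ := abs_add_three _ _ _
    _ ≤ K₀ * ‖d‖ ^ 2 + (∑ i ∈ E, lam i * K i) * ‖d‖ ^ 2 + (∑ i ∈ I, lam i * K i) * ‖d‖ ^ 2 := by
        gcongr
        · exact abs_sub_linearization_le_of_lipschitzWith_gradient hg₀ hK₀ z d
        · exact (abs_sum_mul_comp_sub_sum_mul_comp_le hlam_E abs_abs_sub_abs_le_abs_sub a b).trans
            (hsum E Finset.subset_union_left)
        · exact (abs_sum_mul_comp_sub_sum_mul_comp_le hlam_I abs_max_zero_sub_max_zero_le a b).trans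
            (hsum I Finset.subset_union_right)
    _ = _ := by ring

theorem exists_abs_Jpen_add_sub_Lpen_le (hlam : ∀ i ∈ E ∪ I, 0 ≤ lam i)
    (hg₀ : Differentiable ℝ g₀) (hg₀' : ∃ K : NNReal, LipschitzWith K (gradient g₀))
    (hg : ∀ i ∈ E ∪ I, Differentiable ℝ (g i))
    (hg' : ∀ i ∈ E ∪ I, ∃ K : NNReal, LipschitzWith K (gradient (g i))) :
    ∃ M, 0 ≤ M ∧ ∀ z d : EuclideanSpace ℝ (Fin n),
      |Jpen E I g₀ g lam (z + d) - Lpen E I g₀ g lam z d| ≤ M * ‖d‖ ^ 2 := by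
  obtain ⟨K₀, hK₀⟩ := hg₀'
  have hK' : ∀ i, ∃ K : NNReal, i ∈ E ∪ I → LipschitzWith K (gradient (g i)) := by
    intro i
    by_cases hi : i ∈ E ∪ I
    · exact (hg' i hi).imp fun _ h _ => h
    · exact ⟨0, fun h => absurd h hi⟩
  choose K hK using hK'
  have hlamK : ∀ s ⊆ E ∪ I, 0 ≤ ∑ i ∈ s, lam i * K i := fun s hs =>
    Finset.sum_nonneg fun i hi => mul_nonneg (hlam i (hs hi)) (K i).2
  exact ⟨_, add_nonneg (add_nonneg K₀.2 (hlamK E Finset.subset_union_left))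
    (hlamK I Finset.subset_union_right), abs_Jpen_add_sub_Lpen_le hlam hg₀ hK₀ hg hK⟩

end Penalty

theorem stmt4_general {n : ℕ} {ι : Type*} [DecidableEq ι] (E I : Finset ι)
    (g₀ : EuclideanSpace ℝ (Fin n) → ℝ) (g : ι → EuclideanSpace ℝ (Fin n) → ℝ)
    (lam : ι → ℝ) (hlam : ∀ i ∈ E ∪ I, 0 ≤ lam i)
    (hg₀ : Differentiable ℝ g₀) (hg₀' : ∃ K : NNReal, LipschitzWith K (gradient g₀))
    (hg : ∀ i ∈ E ∪ I, Differentiable ℝ (g i))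
    (hg' : ∀ i ∈ E ∪ I, ∃ K : NNReal, LipschitzWith K (gradient (g i)))
    (zbar s : EuclideanSpace ℝ (Fin n)) (hs : ‖s‖ = 1)
    (κ ε₀ : ℝ) (hκ : 0 < κ) (hε₀ : 0 < ε₀)
    (hdesc : ∀ z : EuclideanSpace ℝ (Fin n), ‖z - zbar‖ < ε₀ → ∀ δ : ℝ, 0 < δ → δ ≤ ε₀ →
      Jpen E I g₀ g lam (z + δ • s) - Jpen E I g₀ g lam z < -(κ / 2) * δ) :
    ∀ c : ℝ, 0 < c → c < 1 → ∃ rbar > (0 : ℝ), ∃ εbar > (0 : ℝ),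
      ∀ z : EuclideanSpace ℝ (Fin n), ‖z - zbar‖ < εbar →
        ∀ r : ℝ, 0 < r → r ≤ rbar →
          ∀ dstar ∈ closedBall (0 : EuclideanSpace ℝ (Fin n)) r,
            IsMinOn (Lpen E I g₀ g lam z) (closedBall 0 r) dstar →
            0 < Jpen E I g₀ g lam z - Lpen E I g₀ g lam z dstar ∧
            Jpen E I g₀ g lam z - Jpen E I g₀ g lam (z + dstar) ≥
              c * (Jpen E I g₀ g lam z - Lpen E I g₀ g lam z dstar) := by
  intro c hc hc1
  obtain ⟨M, hM, herr⟩ := exists_abs_Jpen_add_sub_Lpen_le hlam hg₀ hg₀' hg hg'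
  refine ⟨min ε₀ ((1 - c) * κ / (4 * (M + 1))), by positivity, ε₀, hε₀,
    fun z hz r hr hrbar dstar hd hmin => ?_⟩
  have hMr : M * r ≤ (1 - c) * κ / 4 :=
    calc M * r ≤ (M + 1) * r := by linarith
      _ ≤ (M + 1) * ((1 - c) * κ / (4 * (M + 1))) := by gcongr; exact hrbar.trans (min_le_right _ _)
      _ = (1 - c) * κ / 4 := by field_simp
  exact hmin.sufficient_decrease_of_abs_sub_le_sq hM (herr z) hs hr hκ hc.le hc1.le hMr
    (hdesc z hz r hr (hrbar.trans (min_le_left _ _))) hd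

theorem stmt4 {n : ℕ} {ι : Type*} [DecidableEq ι] (E I : Finset ι) (hEI : Disjoint E I)
    (g₀ : EuclideanSpace ℝ (Fin n) → ℝ) (g : ι → EuclideanSpace ℝ (Fin n) → ℝ)
    (lam : ι → ℝ) (hlam : ∀ i ∈ E ∪ I, 0 ≤ lam i)
    (hg₀ : Differentiable ℝ g₀) (hg₀' : ∃ K : NNReal, LipschitzWith K (gradient g₀))
    (hg : ∀ i ∈ E ∪ I, Differentiable ℝ (g i))
    (hg' : ∀ i ∈ E ∪ I, ∃ K : NNReal, LipschitzWith K (gradient (g i)))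
    (zbar s : EuclideanSpace ℝ (Fin n)) (hs : ‖s‖ = 1)
    (κ ε₀ : ℝ) (hκ : 0 < κ) (hε₀ : 0 < ε₀)
    (hdesc : ∀ z : EuclideanSpace ℝ (Fin n), ‖z - zbar‖ < ε₀ → ∀ δ : ℝ, 0 < δ → δ ≤ ε₀ →
      Jpen E I g₀ g lam (z + δ • s) - Jpen E I g₀ g lam z < -(κ / 2) * δ) :
    ∀ c : ℝ, 0 < c → c < 1 → ∃ rbar > (0 : ℝ), ∃ εbar > (0 : ℝ),
      ∀ z : EuclideanSpace ℝ (Fin n), ‖z - zbar‖ < εbar →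
        ∀ r : ℝ, 0 < r → r ≤ rbar →
          ∀ dstar ∈ closedBall (0 : EuclideanSpace ℝ (Fin n)) r,
            IsMinOn (Lpen E I g₀ g lam z) (closedBall 0 r) dstar →
            0 < Jpen E I g₀ g lam z - Lpen E I g₀ g lam z dstar ∧
            Jpen E I g₀ g lam z - Jpen E I g₀ g lam (z + dstar) ≥
              c * (Jpen E I g₀ g lam z - Lpen E I g₀ g lam z dstar) :=
  stmt4_general E I g₀ g lam hlam hg₀ hg₀' hg hg' zbar s hs κ ε₀ hκ hε₀ hdesc
end

section
/- (Quantitative cost decrease near a non-stationary point.) Assume g₀ and all g_i are differentiable with Lipschitz continuous gradients on ℝ^n. Let z̄ ∈ ℝ^n and suppose there exist a unit vector s ∈ ℝ^n, κ > 0, and ε₀ > 0 such that J(z + δ s) − J(z) < −(κ/2)δ for all z with ‖z − z̄‖ < ε₀ and all δ ∈ (0, ε₀]. Then for every c ∈ (0, 1) there exist r̄ > 0 and ε̄ > 0 such that for every z with ‖z − z̄‖ < ε̄, every r ∈ (0, r̄], and every d* minimizing L_z over the closed ball {d : ‖d‖ ≤ r}, one has J(z) − L_z(d*) ≥ c (κ/2)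 r and J(z) − J(z + d*) ≥ c (κ/2) r. -/
/-!
The penalties `|·|` and `max 0 ·` are `1`-Lipschitz, so when all gradients are Lipschitz the
linearized cost is a model with quadratic error: `|J (z + d) - L_z d| ≤ M ‖d‖²`. Comparing the
minimizer `d*` of `L_z` on the ball of radius `r` with the descent step `r • s` gives
`J z - L_z d* ≥ κ r / 2 - M r²` and `J z - J (z + d*) ≥ κ r / 2 - 2 M r²`, and for
`r ≤ (1 - c) κ / (4 (M + 1))` the quadratic loss is at most `(1 - c) κ r / 2`.
-/

open RealInnerProductSpace Metric Filter Topology Asymptotics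

section FirstOrderModel

variable {F : Type*} [NormedAddCommGroup F] [InnerProductSpace ℝ F] [CompleteSpace F]

theorem abs_sub_sub_inner_gradient_le {f : F → ℝ} (hf : Differentiable ℝ f) {K : NNReal}
    (hK : LipschitzWith K (gradient f)) (z d : F) :
    |f (z + d) - f z - ⟪gradient f z, d⟫| ≤ K * ‖d‖ ^ 2 := by
  let T := InnerProductSpace.toDual ℝ F
  have hbound : ∀ x ∈ closedBall z ‖d‖, ‖T (gradient f x) - T (gradient f z)‖ ≤ K * ‖d‖ := by
    intro x hx
    rw [← map_sub, T.norm_map, ← dist_eq_norm]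
    exact (hK.dist_le_mul x z).trans
      (mul_le_mul_of_nonneg_left (mem_closedBall.mp hx) K.2)
  have := (convex_closedBall z ‖d‖).norm_image_sub_le_of_norm_hasFDerivWithin_le'
    (fun x _ => (hf x).hasGradientAt.hasFDerivAt.hasFDerivWithinAt) hbound
    (mem_closedBall_self (norm_nonneg d)) (show z + d ∈ closedBall z ‖d‖ by simp)
  simpa [T, pow_two, mul_assoc] using this

theorem abs_sum_comp_sub_sum_comp_inner_gradient_le {ι : Type*} (S : Finset ι) {φ : ℝ → ℝ}
    (hφ : LipschitzWith 1 φ) {g : ι → F → ℝ} {lam : ι → ℝ} {K : ι → NNReal}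
    (hlam : ∀ i ∈ S, 0 ≤ lam i) (hg : ∀ i ∈ S, Differentiable ℝ (g i))
    (hK : ∀ i ∈ S, LipschitzWith (K i) (gradient (g i))) (z d : F) :
    |∑ i ∈ S, lam i * φ (g i (z + d)) - ∑ i ∈ S, lam i * φ (g i z + ⟪gradient (g i) z, d⟫)|
      ≤ (∑ i ∈ S, lam i * K i) * ‖d‖ ^ 2 := by
  rw [← Finset.sum_sub_distrib, Finset.sum_mul]
  refine (Finset.abs_sum_le_sum_abs _ _).trans (Finset.sum_le_sum fun i hi => ?_)
  rw [← mul_sub, abs_mul, abs_of_nonneg (hlam i hi), mul_assoc]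
  refine mul_le_mul_of_nonneg_left ?_ (hlam i hi)
  calc |φ (g i (z + d)) - φ (g i z + ⟪gradient (g i) z, d⟫)|
      ≤ |g i (z + d) - (g i z + ⟪gradient (g i) z, d⟫)| := by
        simpa [Real.dist_eq] using hφ.dist_le_mul (g i (z + d)) _
    _ ≤ K i * ‖d‖ ^ 2 := by
        rw [← sub_sub]; exact abs_sub_sub_inner_gradient_le (hg i hi) (hK i hi) z d

end FirstOrderModel

theorem le_sub_of_isMinOn_closedBall_of_descent {X : Type*} [NormedAddCommGroup X]
    [NormedSpace ℝ X] {J L : X → ℝ} {z s d : X} {M κ r : ℝ} (hM : 0 ≤ M)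
    (hJL : ∀ v, |J (z + v) - L v| ≤ M * ‖v‖ ^ 2) (hs : ‖s‖ = 1) (hr : 0 ≤ r)
    (hdesc : J (z + r • s) - J z < -(κ / 2) * r) (hd : d ∈ closedBall 0 r)
    (hmin : IsMinOn L (closedBall 0 r) d) :
    κ / 2 * r - M * r ^ 2 ≤ J z - L d ∧ κ / 2 * r - 2 * M * r ^ 2 ≤ J z - J (z + d) := by
  have hrs : ‖r • s‖ = r := by rw [norm_smul, hs, Real.norm_of_nonneg hr, mul_one]
  have hLd : L d ≤ L (r • s) := hmin (mem_closedBall_zero_iff.mpr hrs.le)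
  have hLrs : L (r • s) ≤ J (z + r • s) + M * r ^ 2 := by
    have := (abs_le.mp (hJL (r • s))).1
    rw [hrs] at this
    linarith
  have hJd : J (z + d) ≤ L d + M * r ^ 2 := by
    have hd' : ‖d‖ ^ 2 ≤ r ^ 2 := pow_le_pow_left₀ (norm_nonneg d) (mem_closedBall_zero_iff.mp hd) 2
    linarith [(abs_le.mp (hJL d)).2, mul_le_mul_of_nonneg_left hd' hM]
  constructor <;> linarith

theorem exists_abs_Jpen_sub_Lpen_le {n : ℕ} {ι : Type*} [DecidableEq ι] (E I : Finset ι)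
    {g₀ : EuclideanSpace ℝ (Fin n) → ℝ} {g : ι → EuclideanSpace ℝ (Fin n) → ℝ} {lam : ι → ℝ}
    (hlam : ∀ i ∈ E ∪ I, 0 ≤ lam i)
    (hg₀ : Differentiable ℝ g₀) (hg₀' : ∃ K : NNReal, LipschitzWith K (gradient g₀))
    (hg : ∀ i ∈ E ∪ I, Differentiable ℝ (g i))
    (hg' : ∀ i ∈ E ∪ I, ∃ K : NNReal, LipschitzWith K (gradient (g i))) :
    ∃ M, 0 ≤ M ∧ ∀ z d, |Jpen E I g₀ g lam (z + d) - Lpen E I g₀ g lam z d| ≤ M * ‖d‖ ^ 2 := by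
  obtain ⟨K₀, hK₀⟩ := hg₀'
  choose! K hK using hg'
  have hE : ∀ i ∈ E, i ∈ E ∪ I := fun i => Finset.mem_union_left I
  have hI : ∀ i ∈ I, i ∈ E ∪ I := fun i => Finset.mem_union_right E
  refine ⟨K₀ + ∑ i ∈ E, lam i * K i + ∑ i ∈ I, lam i * K i, by
    have := Finset.sum_nonneg fun i hi => mul_nonneg (hlam i (hE i hi)) (K i).2
    have := Finset.sum_nonneg fun i hi => mul_nonneg (hlam i (hI i hi)) (K i).2
    positivity, fun z d => ?_⟩
  have h₀ := abs_sub_sub_inner_gradient_le hg₀ hK₀ z d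
  have hE := abs_sum_comp_sub_sum_comp_inner_gradient_le E (φ := fun x => |x|)
    lipschitzWith_one_norm (fun i hi => hlam i (hE i hi)) (fun i hi => hg i (hE i hi))
    (fun i hi => hK i (hE i hi)) z d
  have hI := abs_sum_comp_sub_sum_comp_inner_gradient_le I (φ := fun x => max 0 x)
    (LipschitzWith.id.const_max 0) (fun i hi => hlam i (hI i hi)) (fun i hi => hg i (hI i hi))
    (fun i hi => hK i (hI i hi)) z d
  have hsplit : Jpen E I g₀ g lam (z + d) - Lpen E I g₀ g lam z d =
      (g₀ (z + d) - g₀ z - ⟪gradient g₀ z, d⟫) +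
      (∑ i ∈ E, lam i * |g i (z + d)| - ∑ i ∈ E, lam i * |g i z + ⟪gradient (g i) z, d⟫|) +
      (∑ i ∈ I, lam i * max 0 (g i (z + d)) -
        ∑ i ∈ I, lam i * max 0 (g i z + ⟪gradient (g i) z, d⟫)) := by
    simp only [Jpen, Lpen]; ring
  rw [hsplit]
  refine (abs_add_le _ _).trans ((add_le_add_left (abs_add_le _ _) _).trans ?_)
  linarith

theorem stmt5_general {n : ℕ} {ι : Type*} [DecidableEq ι] (E I : Finset ι)
    (g₀ : EuclideanSpace ℝ (Fin n) → ℝ) (g : ι → EuclideanSpace ℝ (Fin n) → ℝ)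
    (lam : ι → ℝ) (hlam : ∀ i ∈ E ∪ I, 0 ≤ lam i)
    (hg₀ : Differentiable ℝ g₀) (hg₀' : ∃ K : NNReal, LipschitzWith K (gradient g₀))
    (hg : ∀ i ∈ E ∪ I, Differentiable ℝ (g i))
    (hg' : ∀ i ∈ E ∪ I, ∃ K : NNReal, LipschitzWith K (gradient (g i)))
    (zbar s : EuclideanSpace ℝ (Fin n)) (hs : ‖s‖ = 1)
    (κ ε₀ : ℝ) (hκ : 0 < κ) (hε₀ : 0 < ε₀)
    (hdesc : ∀ z : EuclideanSpace ℝ (Fin n), ‖z - zbar‖ < ε₀ → ∀ δ : ℝ, 0 < δ → δ ≤ ε₀ →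
      Jpen E I g₀ g lam (z + δ • s) - Jpen E I g₀ g lam z < -(κ / 2) * δ) :
    ∀ c : ℝ, 0 < c → c < 1 → ∃ rbar > (0 : ℝ), ∃ εbar > (0 : ℝ),
      ∀ z : EuclideanSpace ℝ (Fin n), ‖z - zbar‖ < εbar →
        ∀ r : ℝ, 0 < r → r ≤ rbar →
          ∀ dstar ∈ closedBall (0 : EuclideanSpace ℝ (Fin n)) r,
            IsMinOn (Lpen E I g₀ g lam z) (closedBall 0 r) dstar →
            Jpen E I g₀ g lam z - Lpen E I g₀ g lam z dstar ≥ c * (κ / 2) * r ∧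
            Jpen E I g₀ g lam z - Jpen E I g₀ g lam (z + dstar) ≥ c * (κ / 2) * r := by
  intro c hc hc1
  obtain ⟨M, hM, hJL⟩ := exists_abs_Jpen_sub_Lpen_le E I hlam hg₀ hg₀' hg hg'
  have hc' : 0 < 1 - c := sub_pos.mpr hc1
  refine ⟨min ε₀ ((1 - c) * κ / (4 * (M + 1))), lt_min hε₀ (by positivity), ε₀, hε₀, ?_⟩
  intro z hz r hr hrle dstar hdstar hmin
  have hrM : 4 * (M + 1) * r ≤ (1 - c) * κ := by
    have := hrle.trans (min_le_right _ _)
    rwa [le_div_iff₀ (by positivity), mul_comm] at this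
  have hMr : 2 * M * r ^ 2 ≤ (1 - c) * (κ / 2) * r := by
    nlinarith [mul_le_mul_of_nonneg_right hrM hr.le]
  obtain ⟨hL, hJ⟩ := le_sub_of_isMinOn_closedBall_of_descent hM (hJL z) hs hr.le
    (hdesc z hz r hr (hrle.trans (min_le_left _ _))) hdstar hmin
  constructor <;> linarith [mul_nonneg hM (sq_nonneg r)]

theorem stmt5 {n : ℕ} {ι : Type*} [DecidableEq ι] (E I : Finset ι) (hEI : Disjoint E I)
    (g₀ : EuclideanSpace ℝ (Fin n) → ℝ) (g : ι → EuclideanSpace ℝ (Fin n) → ℝ)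
    (lam : ι → ℝ) (hlam : ∀ i ∈ E ∪ I, 0 ≤ lam i)
    (hg₀ : Differentiable ℝ g₀) (hg₀' : ∃ K : NNReal, LipschitzWith K (gradient g₀))
    (hg : ∀ i ∈ E ∪ I, Differentiable ℝ (g i))
    (hg' : ∀ i ∈ E ∪ I, ∃ K : NNReal, LipschitzWith K (gradient (g i)))
    (zbar s : EuclideanSpace ℝ (Fin n)) (hs : ‖s‖ = 1)
    (κ ε₀ : ℝ) (hκ : 0 < κ) (hε₀ : 0 < ε₀)
    (hdesc : ∀ z : EuclideanSpace ℝ (Fin n), ‖z - zbar‖ < ε₀ → ∀ δ : ℝ, 0 < δ → δ ≤ ε₀ →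
      Jpen E I g₀ g lam (z + δ • s) - Jpen E I g₀ g lam z < -(κ / 2) * δ) :
    ∀ c : ℝ, 0 < c → c < 1 → ∃ rbar > (0 : ℝ), ∃ εbar > (0 : ℝ),
      ∀ z : EuclideanSpace ℝ (Fin n), ‖z - zbar‖ < εbar →
        ∀ r : ℝ, 0 < r → r ≤ rbar →
          ∀ dstar ∈ closedBall (0 : EuclideanSpace ℝ (Fin n)) r,
            IsMinOn (Lpen E I g₀ g lam z) (closedBall 0 r) dstar →
            Jpen E I g₀ g lam z - Lpen E I g₀ g lam z dstar ≥ c * (κ / 2) * r ∧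
            Jpen E I g₀ g lam z - Jpen E I g₀ g lam (z + dstar) ≥ c * (κ / 2) * r :=
  stmt5_general E I g₀ g lam hlam hg₀ hg₀' hg hg' zbar s hs κ ε₀ hκ hε₀ hdesc
end

section
/- (Recovery of KKT conditions at a feasible stationary point.) Let z̄ be a point at which g₀ and all g_i are differentiable. Suppose z̄ is feasible, i.e. g_i(z̄) = 0 for all i ∈ E and g_i(z̄) ≤ 0 for all i ∈ I, and suppose z̄ is stationary for the linearized problem in the sense that L_{z̄}(d) ≥ J(z̄) for all d ∈ ℝ^n. Then there exist multipliers μ_i (i ∈ E ∪ I) with |μ_i| ≤ λ_i for i ∈ E, 0 ≤ μ_i ≤ λ_i for i ∈ I, and μ_i = 0 whenever i ∈ I and g_i(z̄) < 0, such that ∇g₀(z̄) + Σ_{i∈E∪I} μ_i ∇g_i(z̄) = 0. -/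
/-!
Along a ray `s • d` with `s > 0` small, the inactive inequality constraints stay inactive and every
other penalty term is positively homogeneous in `s`, so stationarity divided by `s` gives
`0 ≤ ⟪∇g₀, d⟫ + ∑ᵢ max (lᵢ ⟪∇gᵢ, d⟫) (uᵢ ⟪∇gᵢ, d⟫)` for every `d`, where `[lᵢ, uᵢ]` is `[-λᵢ, λᵢ]`
for equality constraints, `[0, λᵢ]` for active and `{0}` for inactive inequality constraints.
The right-hand sum is the support function at `d` of the compact convex set
`{∑ᵢ μᵢ ∇gᵢ : μ ∈ [l, u]}`, so by Hahn–Banach separation `-∇g₀` lies in that set.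
-/

open RealInnerProductSpace Metric Filter Topology Asymptotics

section Farkas

variable {F ι : Type*} [NormedAddCommGroup F] [InnerProductSpace ℝ F]

theorem exists_mem_Icc_inner_sum_smul_eq_sum_max (S : Finset ι) (b : ι → F) {l u : ι → ℝ}
    (hlu : l ≤ u) (d : F) :
    ∃ μ ∈ Set.Icc l u,
      ⟪∑ i ∈ S, μ i • b i, d⟫ = ∑ i ∈ S, max (l i * ⟪b i, d⟫) (u i * ⟪b i, d⟫) := by
  classical
  refine ⟨fun i => if 0 ≤ ⟪b i, d⟫ then u i else l i, ⟨fun i => ?_, fun i => ?_⟩, ?_⟩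
  · dsimp only; split_ifs <;> simp [hlu i]
  · dsimp only; split_ifs <;> simp [hlu i]
  · rw [sum_inner]
    refine Finset.sum_congr rfl fun i _ => ?_
    rw [real_inner_smul_left]
    dsimp only
    split_ifs with h
    · exact (max_eq_right (mul_le_mul_of_nonneg_right (hlu i) h)).symm
    · exact (max_eq_left (mul_le_mul_of_nonpos_right (hlu i) (not_le.1 h).le)).symm

theorem exists_mem_Icc_add_sum_smul_eq_zero [CompleteSpace F] (S : Finset ι) (a : F)
    (b : ι → F) {l u : ι → ℝ} (hlu : l ≤ u)
    (h : ∀ d, -⟪a, d⟫ ≤ ∑ i ∈ S, max (l i * ⟪b i, d⟫) (u i * ⟪b i, d⟫)) :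
    ∃ μ ∈ Set.Icc l u, a + ∑ i ∈ S, μ i • b i = 0 := by
  set combination : (ι → ℝ) → F := fun μ => ∑ i ∈ S, μ i • b i
  have hlin : IsLinearMap ℝ combination :=
    ⟨fun μ ν => by simp [combination, add_smul, Finset.sum_add_distrib],
      fun c μ => by simp [combination, Finset.smul_sum, smul_smul]⟩
  have hcont : Continuous combination := by fun_prop
  by_contra! hne
  have hmem : -a ∉ combination '' Set.Icc l u := by
    rintro ⟨μ, hμ, hμa⟩
    have hμa' : ∑ i ∈ S, μ i • b i = -a := hμa
    exact hne μ hμ (by rw [hμa', add_neg_cancel])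
  obtain ⟨f, r, hf, hfa⟩ := geometric_hahn_banach_closed_point
    ((convex_Icc l u).is_linear_image hlin) (isCompact_Icc.image hcont).isClosed hmem
  set d := (InnerProductSpace.toDual ℝ F).symm f
  have hfd : ∀ x, f x = ⟪x, d⟫ := fun x => by
    rw [real_inner_comm, InnerProductSpace.toDual_symm_apply]
  obtain ⟨μ, hμ, hμd⟩ := exists_mem_Icc_inner_sum_smul_eq_sum_max S b hlu d
  have hfμ := hf _ ⟨μ, hμ, rfl⟩
  rw [hfd, hμd] at hfμ
  rw [hfd, inner_neg_left] at hfa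
  linarith [h d]

end Farkas

theorem max_neg_mul_mul_eq_mul_abs {c : ℝ} (hc : 0 ≤ c) (t : ℝ) :
    max (-c * t) (c * t) = c * |t| := by
  rw [neg_mul, max_comm, ← abs_eq_max_neg, abs_mul, abs_of_nonneg hc]

section Penalty

variable {n : ℕ} {ι : Type*} [DecidableEq ι] (E I : Finset ι)
  (g : ι → EuclideanSpace ℝ (Fin n) → ℝ) (lam : ι → ℝ) (z : EuclideanSpace ℝ (Fin n))

noncomputable def multiplierLower (i : ι) : ℝ := if i ∈ E then -lam i else 0

noncomputable def multiplierUpper (i : ι) : ℝ :=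
  if i ∈ E ∨ (i ∈ I ∧ g i z = 0) then lam i else 0

variable {E I g lam z}

theorem multiplierLower_le_multiplierUpper (hlam : ∀ i ∈ E ∪ I, 0 ≤ lam i) :
    multiplierLower E lam ≤ multiplierUpper E I g lam z := fun i => by
  by_cases hiE : i ∈ E
  · have := hlam i (Finset.mem_union_left I hiE)
    simp only [multiplierLower, multiplierUpper, hiE, if_true, true_or]
    linarith
  · unfold multiplierLower multiplierUpper
    split_ifs with h
    · exact hlam i (Finset.mem_union_right E (h.resolve_left hiE).1)
    · exact le_rfl

theorem mul_abs_add_mul_eq_add_mul_max {i : ι} (hlam : 0 ≤ lam i) (hi : i ∈ E) (hgi : g i z = 0)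
    (t : ℝ) {s : ℝ} (hs : 0 ≤ s) :
    lam i * |g i z + s * t| =
      lam i * |g i z| +
        s * max (multiplierLower E lam i * t) (multiplierUpper E I g lam z i * t) := by
  simp only [multiplierLower, multiplierUpper, hi, if_true, true_or,
    max_neg_mul_mul_eq_mul_abs hlam, hgi, zero_add, abs_zero, abs_mul, abs_of_nonneg hs]
  ring

theorem eventually_mul_max_zero_add_mul_eq_add_mul_max {i : ι} (hlam : 0 ≤ lam i) (hiE : i ∉ E)
    (hi : i ∈ I) (hgi : g i z ≤ 0) (t : ℝ) :
    ∀ᶠ s in 𝓝[>] (0 : ℝ), lam i * max 0 (g i z + s * t) =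
      lam i * max 0 (g i z) +
        s * max (multiplierLower E lam i * t) (multiplierUpper E I g lam z i * t) := by
  simp only [multiplierLower, multiplierUpper, hiE, hi, if_false, false_or, true_and]
  rcases hgi.eq_or_lt with hgi | hgi
  · filter_upwards [self_mem_nhdsWithin] with s hs
    simp only [hgi, if_true, zero_add, max_self, zero_mul, mul_zero]
    rw [mul_max_of_nonneg _ _ hlam, mul_max_of_nonneg _ _ (Set.mem_Ioi.1 hs).le]
    ring_nf
  · have hlim : Tendsto (fun s : ℝ => g i z + s * t) (𝓝 0) (𝓝 (g i z)) :=
      (continuous_const.add (continuous_id.mul continuous_const)).tendsto' 0 _ (by simp)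
    filter_upwards [nhdsWithin_le_nhds (hlim.eventually (gt_mem_nhds hgi))] with s hs
    simp [hgi.ne, hs.le, hgi.le]

theorem eventually_Lpen_smul_eq (hEI : Disjoint E I) (hlam : ∀ i ∈ E ∪ I, 0 ≤ lam i)
    (hfeasE : ∀ i ∈ E, g i z = 0) (hfeasI : ∀ i ∈ I, g i z ≤ 0)
    (g₀ : EuclideanSpace ℝ (Fin n) → ℝ) (d : EuclideanSpace ℝ (Fin n)) :
    ∀ᶠ s in 𝓝[>] (0 : ℝ), Lpen E I g₀ g lam z (s • d) = Jpen E I g₀ g lam z +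
      s * (⟪gradient g₀ z, d⟫ + ∑ i ∈ E ∪ I, max (multiplierLower E lam i * ⟪gradient (g i) z, d⟫)
        (multiplierUpper E I g lam z i * ⟪gradient (g i) z, d⟫)) := by
  have hE : ∀ i ∈ E, ∀ᶠ s in 𝓝[>] (0 : ℝ),
      lam i * |g i z + s * ⟪gradient (g i) z, d⟫| = lam i * |g i z| +
        s * max (multiplierLower E lam i * ⟪gradient (g i) z, d⟫)
          (multiplierUpper E I g lam z i * ⟪gradient (g i) z, d⟫) := fun i hi => by
    filter_upwards [self_mem_nhdsWithin] with s hs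
    exact mul_abs_add_mul_eq_add_mul_max (hlam i (Finset.mem_union_left I hi)) hi
      (hfeasE i hi) _ (Set.mem_Ioi.1 hs).le
  have hI : ∀ i ∈ I, ∀ᶠ s in 𝓝[>] (0 : ℝ),
      lam i * max 0 (g i z + s * ⟪gradient (g i) z, d⟫) = lam i * max 0 (g i z) +
        s * max (multiplierLower E lam i * ⟪gradient (g i) z, d⟫)
          (multiplierUpper E I g lam z i * ⟪gradient (g i) z, d⟫) := fun i hi =>
    eventually_mul_max_zero_add_mul_eq_add_mul_max (hlam i (Finset.mem_union_right E hi))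
      (Finset.disjoint_right.1 hEI hi) hi (hfeasI i hi) _
  filter_upwards [(eventually_all_finset E).2 hE, (eventually_all_finset I).2 hI] with s hsE hsI
  simp only [Lpen, Jpen, real_inner_smul_right]
  rw [Finset.sum_congr rfl hsE, Finset.sum_congr rfl hsI, Finset.sum_union hEI,
    Finset.sum_add_distrib, Finset.sum_add_distrib, ← Finset.mul_sum, ← Finset.mul_sum]
  ring

theorem inner_gradient_add_sum_max_nonneg (hEI : Disjoint E I) (hlam : ∀ i ∈ E ∪ I, 0 ≤ lam i)
    (hfeasE : ∀ i ∈ E, g i z = 0) (hfeasI : ∀ i ∈ I, g i z ≤ 0)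
    {g₀ : EuclideanSpace ℝ (Fin n) → ℝ}
    (hstat : ∀ d, Lpen E I g₀ g lam z d ≥ Jpen E I g₀ g lam z) (d : EuclideanSpace ℝ (Fin n)) :
    0 ≤ ⟪gradient g₀ z, d⟫ + ∑ i ∈ E ∪ I, max (multiplierLower E lam i * ⟪gradient (g i) z, d⟫)
      (multiplierUpper E I g lam z i * ⟪gradient (g i) z, d⟫) := by
  obtain ⟨s, hs_eq, hs⟩ :=
    ((eventually_Lpen_smul_eq hEI hlam hfeasE hfeasI g₀ d).and self_mem_nhdsWithin).exists
  have hstat_s := hstat (s • d)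
  rw [hs_eq] at hstat_s
  exact nonneg_of_mul_nonneg_right (by linarith) hs

theorem multiplier_conditions_of_mem_Icc (hEI : Disjoint E I) (hlam : ∀ i ∈ E ∪ I, 0 ≤ lam i)
    {μ : ι → ℝ} (hμ : μ ∈ Set.Icc (multiplierLower E lam) (multiplierUpper E I g lam z)) :
    (∀ i ∈ E, |μ i| ≤ lam i) ∧ (∀ i ∈ I, 0 ≤ μ i ∧ μ i ≤ lam i) ∧
      (∀ i ∈ I, g i z < 0 → μ i = 0) := by
  refine ⟨fun i hi => ?_, fun i hi => ?_, fun i hi hneg => ?_⟩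
  · have hl := hμ.1 i
    have hu := hμ.2 i
    simp only [multiplierLower, multiplierUpper, hi, if_true, true_or] at hl hu
    exact abs_le.2 ⟨hl, hu⟩
  · have hiE := Finset.disjoint_right.1 hEI hi
    have hl := hμ.1 i
    have hu := hμ.2 i
    simp only [multiplierLower, multiplierUpper, hiE, hi, if_false, false_or, true_and] at hl hu
    refine ⟨hl, hu.trans ?_⟩
    split_ifs
    exacts [le_rfl, hlam i (Finset.mem_union_right E hi)]
  · have hiE := Finset.disjoint_right.1 hEI hi
    have hl := hμ.1 i
    have hu := hμ.2 i
    simp only [multiplierLower, multiplierUpper, hiE, hi, hneg.ne, if_false, false_or,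
      true_and] at hl hu
    exact le_antisymm hu hl

end Penalty

theorem stmt7_general {n : ℕ} {ι : Type*} [DecidableEq ι] (E I : Finset ι) (hEI : Disjoint E I)
    (g₀ : EuclideanSpace ℝ (Fin n) → ℝ) (g : ι → EuclideanSpace ℝ (Fin n) → ℝ)
    (lam : ι → ℝ) (hlam : ∀ i ∈ E ∪ I, 0 ≤ lam i)
    (zbar : EuclideanSpace ℝ (Fin n))
    (hfeasE : ∀ i ∈ E, g i zbar = 0) (hfeasI : ∀ i ∈ I, g i zbar ≤ 0)
    (hstat : ∀ d : EuclideanSpace ℝ (Fin n),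
      Lpen E I g₀ g lam zbar d ≥ Jpen E I g₀ g lam zbar) :
    ∃ μ : ι → ℝ,
      (∀ i ∈ E, |μ i| ≤ lam i) ∧
      (∀ i ∈ I, 0 ≤ μ i ∧ μ i ≤ lam i) ∧
      (∀ i ∈ I, g i zbar < 0 → μ i = 0) ∧
      gradient g₀ zbar + ∑ i ∈ E ∪ I, μ i • gradient (g i) zbar = 0 := by
  obtain ⟨μ, hμ, hsum⟩ := exists_mem_Icc_add_sum_smul_eq_zero (E ∪ I)
    (gradient g₀ zbar) (fun i => gradient (g i) zbar) (multiplierLower_le_multiplierUpper hlam)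
    fun d => by linarith [inner_gradient_add_sum_max_nonneg hEI hlam hfeasE hfeasI hstat d]
  obtain ⟨hμE, hμI, hcompl⟩ := multiplier_conditions_of_mem_Icc hEI hlam hμ
  exact ⟨μ, hμE, hμI, hcompl, hsum⟩

theorem stmt7 {n : ℕ} {ι : Type*} [DecidableEq ι] (E I : Finset ι) (hEI : Disjoint E I)
    (g₀ : EuclideanSpace ℝ (Fin n) → ℝ) (g : ι → EuclideanSpace ℝ (Fin n) → ℝ)
    (lam : ι → ℝ) (hlam : ∀ i ∈ E ∪ I, 0 ≤ lam i)
    (zbar : EuclideanSpace ℝ (Fin n))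
    (hg₀ : DifferentiableAt ℝ g₀ zbar) (hg : ∀ i ∈ E ∪ I, DifferentiableAt ℝ (g i) zbar)
    (hfeasE : ∀ i ∈ E, g i zbar = 0) (hfeasI : ∀ i ∈ I, g i zbar ≤ 0)
    (hstat : ∀ d : EuclideanSpace ℝ (Fin n),
      Lpen E I g₀ g lam zbar d ≥ Jpen E I g₀ g lam zbar) :
    ∃ μ : ι → ℝ,
      (∀ i ∈ E, |μ i| ≤ lam i) ∧
      (∀ i ∈ I, 0 ≤ μ i ∧ μ i ≤ lam i) ∧
      (∀ i ∈ I, g i zbar < 0 → μ i = 0) ∧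
      gradient g₀ zbar + ∑ i ∈ E ∪ I, μ i • gradient (g i) zbar = 0 :=
  stmt7_general E I hEI g₀ g lam hlam zbar hfeasE hfeasI hstat
end

section
/- (Sharp local growth of the exact penalty function.) Assume g₀ and all g_i are differentiable at z̄, and that z̄ is feasible: g_i(z̄) = 0 for all i ∈ E and g_i(z̄) ≤ 0 for all i ∈ I. Let A := {i ∈ I : g_i(z̄) = 0} be the active inequality set. Suppose there exist multipliers μ_i (i ∈ E ∪ A) satisfying: (i) the KKT equation ∇g₀(z̄) + Σ_{i∈E∪A} μ_i ∇g_i(z̄) = 0; (ii) strict exactness λ_i > |μ_i| for i ∈ E; (iii) strict complementarity with exactness 0 < μ_i < λ_i for i ∈ A; and suppose (iv) the family of gradients {∇g_i(z̄) : i ∈ E ∪ A} spans ℝ^n. Then there exist β > 0 and δ > 0 such that J(z) − J(z̄) ≥ β ‖z − z̄‖ for every z with ‖z − z̄‖ ≤ δ. -/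
open RealInnerProductSpace

/-!
Near `zbar` the inactive constraints only add nonnegative terms, and the active ones may be
replaced by their linearizations at the cost of `o(‖z - zbar‖)`. So it suffices to bound the
linearized penalty `ℓ(h) = ⟪∇g₀, h⟫ + ∑_E λᵢ |sᵢ| + ∑_A λᵢ max 0 sᵢ`, where `sᵢ = ⟪∇gᵢ, h⟫`,
below by a multiple of `‖h‖`. The KKT equation rewrites `ℓ(h)` as
`∑_E (λᵢ |sᵢ| - μᵢ sᵢ) + ∑_A (λᵢ max 0 sᵢ - μᵢ sᵢ)`; by strict exactness and strict
complementarity each term is at least `c |sᵢ|` for a common `c > 0`, and since the gradients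
span, `∑ |sᵢ|` controls `‖h‖`.
-/

open Asymptotics Filter Topology

theorem exists_pos_forall_le_of_forall_pos {ι : Type*} (s : Finset ι) (f : ι → ℝ)
    (hf : ∀ i ∈ s, 0 < f i) :
    ∃ c > 0, ∀ i ∈ s, c ≤ f i := by
  rcases s.eq_empty_or_nonempty with rfl | hs
  · exact ⟨1, one_pos, by simp⟩
  · obtain ⟨j, hj, hmin⟩ := s.exists_min_image f hs
    exact ⟨f j, hf j hj, hmin⟩

section LinearAlgebra

variable {ι F : Type*} [NormedAddCommGroup F] [InnerProductSpace ℝ F]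

theorem exists_norm_le_mul_sum_abs_inner [FiniteDimensional ℝ F] (s : Finset ι) (v : ι → F)
    (hspan : Submodule.span ℝ (v '' s) = ⊤) :
    ∃ K > 0, ∀ h : F, ‖h‖ ≤ K * ∑ i ∈ s, |⟪v i, h⟫| := by
  let T : F →ₗ[ℝ] (s → ℝ) := LinearMap.pi fun i => (innerSL ℝ (v i)).toLinearMap
  have hker : LinearMap.ker T = ⊥ := by
    refine LinearMap.ker_eq_bot'.2 fun h hTh => ?_
    have hspan_le : Submodule.span ℝ (v '' s) ≤ LinearMap.ker (innerSL ℝ h).toLinearMap := by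
      rw [Submodule.span_le]
      rintro _ ⟨i, hi, rfl⟩
      simpa [T, real_inner_comm] using congrFun hTh ⟨i, hi⟩
    rw [hspan] at hspan_le
    simpa using hspan_le (Submodule.mem_top (x := h))
  obtain ⟨K, hK, hanti⟩ := T.exists_antilipschitzWith hker
  refine ⟨K, hK, fun h => ?_⟩
  have hT : ‖T h‖ ≤ ∑ i ∈ s, |⟪v i, h⟫| := by
    refine (pi_norm_le_iff_of_nonneg (by positivity)).2 fun i => ?_
    simpa [T] using Finset.single_le_sum (f := fun j => |⟪v j, h⟫|)
      (fun j _ => abs_nonneg _) i.2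
  calc ‖h‖ ≤ K * ‖T h‖ := by simpa using hanti.le_mul_dist h 0
    _ ≤ K * ∑ i ∈ s, |⟪v i, h⟫| := by gcongr

end LinearAlgebra

theorem sub_abs_mul_abs_le (lam μ s : ℝ) : (lam - |μ|) * |s| ≤ lam * |s| - μ * s := by
  rw [sub_mul]
  linarith [(le_abs_self (μ * s)).trans_eq (abs_mul μ s)]

theorem min_mul_abs_le_mul_max_zero_sub (lam μ s : ℝ) :
    min μ (lam - μ) * |s| ≤ lam * max 0 s - μ * s := by
  rcases le_or_gt 0 s with hs | hs
  · rw [max_eq_right hs, abs_of_nonneg hs]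
    nlinarith [min_le_right μ (lam - μ)]
  · rw [max_eq_left hs.le, abs_of_neg hs]
    nlinarith [min_le_left μ (lam - μ)]

section Linearization

variable {ι F : Type*} [NormedAddCommGroup F] [InnerProductSpace ℝ F]

/-- The directional derivative of `Jpen` at a feasible point whose active constraints are
`E ∪ A`, with `v₀` and `v i` in the roles of `∇g₀` and `∇gᵢ`. -/
def linearizedPenalty (E A : Finset ι) (v₀ : F) (v : ι → F) (lam : ι → ℝ) (h : F) : ℝ :=
  ⟪v₀, h⟫ + ∑ i ∈ E, lam i * |⟪v i, h⟫| + ∑ i ∈ A, lam i * max 0 ⟪v i, h⟫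

theorem exists_mul_norm_le_linearizedPenalty [FiniteDimensional ℝ F] [DecidableEq ι]
    {E A : Finset ι} (hEA : Disjoint E A) {v₀ : F} {v : ι → F} {lam μ : ι → ℝ}
    (hkkt : v₀ + ∑ i ∈ E ∪ A, μ i • v i = 0)
    (hexactE : ∀ i ∈ E, |μ i| < lam i) (hexactA : ∀ i ∈ A, 0 < μ i ∧ μ i < lam i)
    (hspan : Submodule.span ℝ (v '' ↑(E ∪ A)) = ⊤) :
    ∃ β > 0, ∀ h : F, β * ‖h‖ ≤ linearizedPenalty E A v₀ v lam h := by
  obtain ⟨K, hK, hnorm⟩ := exists_norm_le_mul_sum_abs_inner (E ∪ A) v hspan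
  obtain ⟨cE, hcE, hcE_le⟩ := exists_pos_forall_le_of_forall_pos E (fun i => lam i - |μ i|)
    fun i hi => sub_pos.2 (hexactE i hi)
  obtain ⟨cA, hcA, hcA_le⟩ := exists_pos_forall_le_of_forall_pos A
    (fun i => min (μ i) (lam i - μ i))
    fun i hi => lt_min (hexactA i hi).1 (sub_pos.2 (hexactA i hi).2)
  set c := min cE cA
  refine ⟨c / K, by positivity, fun h => ?_⟩
  have hv₀ : ⟪v₀, h⟫ = -(∑ i ∈ E, μ i * ⟪v i, h⟫ + ∑ i ∈ A, μ i * ⟪v i, h⟫) := by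
    rw [eq_neg_of_add_eq_zero_left hkkt, inner_neg_left, sum_inner, Finset.sum_union hEA]
    simp only [real_inner_smul_left]
  have hE : ∑ i ∈ E, c * |⟪v i, h⟫| ≤ ∑ i ∈ E, (lam i * |⟪v i, h⟫| - μ i * ⟪v i, h⟫) :=
    Finset.sum_le_sum fun i hi => le_trans
      (by gcongr; exact (min_le_left _ _).trans (hcE_le i hi)) (sub_abs_mul_abs_le _ _ _)
  have hA : ∑ i ∈ A, c * |⟪v i, h⟫| ≤ ∑ i ∈ A, (lam i * max 0 ⟪v i, h⟫ - μ i * ⟪v i, h⟫) :=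
    Finset.sum_le_sum fun i hi => le_trans
      (by gcongr; exact (min_le_right _ _).trans (hcA_le i hi))
      (min_mul_abs_le_mul_max_zero_sub _ _ _)
  calc c / K * ‖h‖ ≤ c / K * (K * ∑ i ∈ E ∪ A, |⟪v i, h⟫|) := by gcongr; exact hnorm h
    _ = ∑ i ∈ E, c * |⟪v i, h⟫| + ∑ i ∈ A, c * |⟪v i, h⟫| := by
      rw [Finset.sum_union hEA, ← Finset.mul_sum, ← Finset.mul_sum]
      field_simp
    _ ≤ linearizedPenalty E A v₀ v lam h := by
      rw [linearizedPenalty, hv₀]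
      simp only [Finset.sum_sub_distrib] at hE hA
      linarith

end Linearization

section Penalty

variable {n : ℕ} {ι : Type*} [DecidableEq ι] {E I A : Finset ι}
  {g₀ : EuclideanSpace ℝ (Fin n) → ℝ} {g : ι → EuclideanSpace ℝ (Fin n) → ℝ} {lam : ι → ℝ}
  {zbar : EuclideanSpace ℝ (Fin n)}

theorem linearizedPenalty_sub_le_Jpen_sub (hAI : A ⊆ I) (hlam : ∀ i ∈ E ∪ I, 0 ≤ lam i)
    (hfeasE : ∀ i ∈ E, g i zbar = 0) (hfeasI : ∀ i ∈ I, g i zbar ≤ 0)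
    (v₀ : EuclideanSpace ℝ (Fin n)) (v : ι → EuclideanSpace ℝ (Fin n))
    (z : EuclideanSpace ℝ (Fin n)) :
    linearizedPenalty E A v₀ v lam (z - zbar) -
        (|g₀ z - g₀ zbar - ⟪v₀, z - zbar⟫| + ∑ i ∈ E, lam i * |g i z - ⟪v i, z - zbar⟫| +
          ∑ i ∈ A, lam i * |g i z - ⟪v i, z - zbar⟫|) ≤
      Jpen E I g₀ g lam z - Jpen E I g₀ g lam zbar := by
  have hJbar : Jpen E I g₀ g lam zbar = g₀ zbar := by
    rw [Jpen, Finset.sum_eq_zero fun i hi => by rw [hfeasE i hi, abs_zero, mul_zero],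
      Finset.sum_eq_zero fun i hi => by rw [max_eq_left (hfeasI i hi), mul_zero]]
    ring
  have hI : ∑ i ∈ A, lam i * max 0 (g i z) ≤ ∑ i ∈ I, lam i * max 0 (g i z) :=
    Finset.sum_le_sum_of_subset_of_nonneg hAI fun i hi _ =>
      mul_nonneg (hlam i (Finset.mem_union_right _ hi)) (le_max_left _ _)
  have hE : ∑ i ∈ E, (lam i * |⟪v i, z - zbar⟫| - lam i * |g i z - ⟪v i, z - zbar⟫|) ≤
      ∑ i ∈ E, lam i * |g i z| := by
    refine Finset.sum_le_sum fun i hi => ?_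
    rw [← mul_sub]
    refine mul_le_mul_of_nonneg_left ?_ (hlam i (Finset.mem_union_left _ hi))
    linarith [abs_sub_abs_le_abs_sub ⟪v i, z - zbar⟫ (g i z), abs_sub_comm (g i z) ⟪v i, z - zbar⟫]
  have hA : ∑ i ∈ A, (lam i * max 0 ⟪v i, z - zbar⟫ - lam i * |g i z - ⟪v i, z - zbar⟫|) ≤
      ∑ i ∈ A, lam i * max 0 (g i z) := by
    refine Finset.sum_le_sum fun i hi => ?_
    rw [← mul_sub]
    refine mul_le_mul_of_nonneg_left ?_ (hlam i (Finset.mem_union_right _ (hAI hi)))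
    have hlip : max 0 ⟪v i, z - zbar⟫ - max 0 (g i z) ≤ |g i z - ⟪v i, z - zbar⟫| :=
      calc max 0 ⟪v i, z - zbar⟫ - max 0 (g i z)
          ≤ |max ⟪v i, z - zbar⟫ 0 - max (g i z) 0| := by
            rw [max_comm ⟪v i, z - zbar⟫, max_comm (g i z)]; exact le_abs_self _
        _ ≤ |⟪v i, z - zbar⟫ - g i z| := abs_max_sub_max_le_abs _ _ _
        _ = |g i z - ⟪v i, z - zbar⟫| := abs_sub_comm _ _
    linarith
  rw [hJbar, Jpen, linearizedPenalty]
  simp only [Finset.sum_sub_distrib] at hE hA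
  linarith [neg_abs_le (g₀ z - g₀ zbar - ⟪v₀, z - zbar⟫)]

theorem eventually_linearizedPenalty_sub_le_Jpen_sub (hAI : A ⊆ I)
    (hlam : ∀ i ∈ E ∪ I, 0 ≤ lam i) (hg₀ : DifferentiableAt ℝ g₀ zbar)
    (hg : ∀ i ∈ E ∪ A, DifferentiableAt ℝ (g i) zbar)
    (hfeasE : ∀ i ∈ E, g i zbar = 0) (hfeasI : ∀ i ∈ I, g i zbar ≤ 0)
    (hactive : ∀ i ∈ A, g i zbar = 0) {ε : ℝ} (hε : 0 < ε) :
    ∀ᶠ z in 𝓝 zbar,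
      linearizedPenalty E A (gradient g₀ zbar) (fun i => gradient (g i) zbar) lam (z - zbar) -
          ε * ‖z - zbar‖ ≤
        Jpen E I g₀ g lam z - Jpen E I g₀ g lam zbar := by
  have hrem : ∀ i ∈ E ∪ A,
      (fun z => g i z - ⟪gradient (g i) zbar, z - zbar⟫) =o[𝓝 zbar] fun z => z - zbar := by
    intro i hi
    have hzero : g i zbar = 0 := (Finset.mem_union.1 hi).elim (hfeasE i) (hactive i)
    simpa [hzero] using hasGradientAt_iff_isLittleO.1 (hg i hi).hasGradientAt
  have hremSum : ∀ S ⊆ E ∪ A,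
      (fun z => ∑ i ∈ S, lam i * |g i z - ⟪gradient (g i) zbar, z - zbar⟫|) =o[𝓝 zbar]
        fun z => z - zbar := fun S hS =>
    IsLittleO.fun_sum fun i hi => (isLittleO_abs_left.2 (hrem i (hS hi))).const_mul_left _
  have hremTotal := ((isLittleO_abs_left.2 (hasGradientAt_iff_isLittleO.1 hg₀.hasGradientAt)).add
    (hremSum E Finset.subset_union_left)).add (hremSum A Finset.subset_union_right)
  filter_upwards [hremTotal.def hε] with z hz
  refine le_trans ?_ (linearizedPenalty_sub_le_Jpen_sub hAI hlam hfeasE hfeasI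
    (gradient g₀ zbar) (fun i => gradient (g i) zbar) z)
  gcongr
  exact (Real.le_norm_self _).trans hz

end Penalty

theorem stmt13 {n : ℕ} {ι : Type*} [DecidableEq ι] (E I : Finset ι) (hEI : Disjoint E I)
    (g₀ : EuclideanSpace ℝ (Fin n) → ℝ) (g : ι → EuclideanSpace ℝ (Fin n) → ℝ)
    (lam : ι → ℝ) (hlam : ∀ i ∈ E ∪ I, 0 ≤ lam i)
    (zbar : EuclideanSpace ℝ (Fin n))
    (hg₀ : DifferentiableAt ℝ g₀ zbar) (hg : ∀ i ∈ E ∪ I, DifferentiableAt ℝ (g i) zbar)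
    (hfeasE : ∀ i ∈ E, g i zbar = 0) (hfeasI : ∀ i ∈ I, g i zbar ≤ 0)
    (A : Finset ι) (hA : ∀ i, i ∈ A ↔ i ∈ I ∧ g i zbar = 0)
    (μ : ι → ℝ)
    (hkkt : gradient g₀ zbar + ∑ i ∈ E ∪ A, μ i • gradient (g i) zbar = 0)
    (hexactE : ∀ i ∈ E, |μ i| < lam i)
    (hexactA : ∀ i ∈ A, 0 < μ i ∧ μ i < lam i)
    (hspan : Submodule.span ℝ ((fun i => gradient (g i) zbar) '' ↑(E ∪ A)) = ⊤) :
    ∃ β > (0 : ℝ), ∃ δ > (0 : ℝ),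
      ∀ z : EuclideanSpace ℝ (Fin n), ‖z - zbar‖ ≤ δ →
        Jpen E I g₀ g lam z - Jpen E I g₀ g lam zbar ≥ β * ‖z - zbar‖ := by
  have hAI : A ⊆ I := fun i hi => ((hA i).1 hi).1
  obtain ⟨β, hβ, hgrowth⟩ :=
    exists_mul_norm_le_linearizedPenalty (hEI.mono_right hAI) hkkt hexactE hexactA hspan
  have hnear := eventually_linearizedPenalty_sub_le_Jpen_sub hAI hlam hg₀
    (fun i hi => hg i (Finset.union_subset_union_right hAI hi)) hfeasE hfeasI
    (fun i hi => ((hA i).1 hi).2) (half_pos hβ)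
  obtain ⟨δ, hδ, hball⟩ := Metric.eventually_nhds_iff.1 hnear
  refine ⟨β / 2, half_pos hβ, δ / 2, half_pos hδ, fun z hz => ?_⟩
  have hJ := hball (by rw [dist_eq_norm]; linarith : dist z zbar < δ)
  linarith [hgrowth (z - zbar)]
end

section
/- (Growth transfers to the linearization.) Let ψ : ℝ^m → ℝ be a convex function, let G : ℝ^n → ℝ^m be differentiable at z̄ with (Fréchet) derivative A : ℝ^n → ℝ^m, and suppose there exist β > 0 and δ > 0 such that ψ(G(z)) ≥ ψ(G(z̄)) + β ‖z − z̄‖ for all z with ‖z − z̄‖ ≤ δ. Then there exists γ > 0 such that ψ(G(z̄) + A d) ≥ ψ(G(z̄)) + γ ‖d‖ for all d ∈ ℝ^n. -/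
/-!
Near `z̄`, the points `G (z̄ + d)` and `G z̄ + A d` differ by `o(‖d‖)` and both lie in a
neighbourhood of `G z̄` on which the convex function `ψ` is Lipschitz, so
`ψ (G (z̄ + d)) - ψ (G z̄ + A d) = o(‖d‖)`. Hence the sharp growth of `ψ ∘ G` at `z̄` passes, with
half the rate, to `d ↦ ψ (G z̄ + A d)` for small `d`. This function is convex, and for a convex
function growth at a point along short directions propagates to all directions by comparing
`x + s • v` with the chord from `x` to `x + v`.
-/

open Topology Filter Asymptotics

theorem LipschitzOnWith.isBigO_comp_sub {α E F : Type*} [SeminormedAddCommGroup E]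
    [SeminormedAddCommGroup F] {ψ : E → F} {K : NNReal} {t : Set E}
    (hψ : LipschitzOnWith K ψ t) {l : Filter α} {u v : α → E}
    (hu : ∀ᶠ x in l, u x ∈ t) (hv : ∀ᶠ x in l, v x ∈ t) :
    (fun x => ψ (u x) - ψ (v x)) =O[l] fun x => u x - v x :=
  IsBigO.of_bound K <| by
    filter_upwards [hu, hv] with x hux hvx
    simpa only [dist_eq_norm] using hψ.dist_le_mul _ hux _ hvx

theorem eventually_growth_of_isLittleO_sub {E : Type*} [SeminormedAddCommGroup E]
    {φ₁ φ₂ : E → ℝ} {β γ : ℝ} (hγβ : γ < β)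
    (hgrowth : ∀ᶠ d in 𝓝 0, φ₁ 0 + β * ‖d‖ ≤ φ₁ d)
    (hsub : (fun d => φ₁ d - φ₂ d) =o[𝓝 0] fun d => d) :
    ∀ᶠ d in 𝓝 0, φ₂ 0 + γ * ‖d‖ ≤ φ₂ d := by
  have hbound := hsub.def (sub_pos.mpr hγβ)
  have hzero : φ₁ 0 = φ₂ 0 := by
    simpa [sub_eq_zero] using hbound.self_of_nhds
  filter_upwards [hgrowth, hbound] with d hd hsubd
  rw [Real.norm_eq_abs, abs_le] at hsubd
  linarith [hsubd.2]

theorem ConvexOn.add_mul_norm_le_of_eventually {E : Type*} [SeminormedAddCommGroup E]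
    [NormedSpace ℝ E] {f : E → ℝ} (hf : ConvexOn ℝ Set.univ f) {x : E} {γ : ℝ}
    (hlocal : ∀ᶠ v in 𝓝 0, f x + γ * ‖v‖ ≤ f (x + v)) (v : E) :
    f x + γ * ‖v‖ ≤ f (x + v) := by
  have hsmul : Tendsto (fun s : ℝ => s • v) (𝓝[>] 0) (𝓝 0) := by
    simpa using (tendsto_id.smul_const v).mono_left (nhdsWithin_le_nhds (a := (0 : ℝ)))
  obtain ⟨s, hs, hs01⟩ :=
    ((hsmul.eventually hlocal).and (Ioo_mem_nhdsGT one_pos)).exists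
  have hchord : x + s • v = (1 - s) • x + s • (x + v) := by module
  have hconv := hf.2 (Set.mem_univ x) (Set.mem_univ (x + v)) (sub_nonneg.mpr hs01.2.le)
    hs01.1.le (sub_add_cancel 1 s)
  rw [← hchord, smul_eq_mul, smul_eq_mul] at hconv
  rw [norm_smul, Real.norm_of_nonneg hs01.1.le] at hs
  have hscaled : s * (f x + γ * ‖v‖) ≤ s * f (x + v) := by linarith
  exact le_of_mul_le_mul_left hscaled hs01.1

theorem stmt14 {n m : ℕ} (ψ : EuclideanSpace ℝ (Fin m) → ℝ)
    (hψ : ConvexOn ℝ Set.univ ψ)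
    (G : EuclideanSpace ℝ (Fin n) → EuclideanSpace ℝ (Fin m))
    (A : EuclideanSpace ℝ (Fin n) →L[ℝ] EuclideanSpace ℝ (Fin m))
    (zbar : EuclideanSpace ℝ (Fin n)) (hG : HasFDerivAt G A zbar)
    (β δ : ℝ) (hβ : 0 < β) (hδ : 0 < δ)
    (hgrowth : ∀ z : EuclideanSpace ℝ (Fin n), ‖z - zbar‖ ≤ δ →
      ψ (G z) ≥ ψ (G zbar) + β * ‖z - zbar‖) :
    ∃ γ > (0 : ℝ), ∀ d : EuclideanSpace ℝ (Fin n),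
      ψ (G zbar + A d) ≥ ψ (G zbar) + γ * ‖d‖ := by
  set φ : EuclideanSpace ℝ (Fin n) → ℝ := fun d => ψ (G zbar + A d)
  have hφ : ConvexOn ℝ Set.univ φ := by
    have h := (hψ.translate_right (G zbar)).comp_linearMap A.toLinearMap
    rw [Set.preimage_univ, Set.preimage_univ] at h
    exact h
  obtain ⟨K, t, ht, hlip⟩ := hψ.locallyLipschitz (G zbar)
  have hG_near : ∀ᶠ d in 𝓝 0, G (zbar + d) ∈ t :=
    (hG.continuousAt.comp_of_eq (continuous_const_add zbar).continuousAt
      (add_zero zbar)).eventually_mem (by simpa using ht)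
  have hlin_near : ∀ᶠ d in 𝓝 0, G zbar + A d ∈ t := by
    refine ContinuousAt.eventually_mem ?_ (by simpa using ht)
    fun_prop
  have hsub : (fun d => ψ (G (zbar + d)) - φ d) =o[𝓝 0] fun d => d := by
    refine (hlip.isBigO_comp_sub hG_near hlin_near).trans_isLittleO ?_
    simpa only [sub_add_eq_sub_sub] using hasFDerivAt_iff_isLittleO_nhds_zero.mp hG
  have hgrowth_near : ∀ᶠ d in 𝓝 0, ψ (G (zbar + 0)) + β * ‖d‖ ≤ ψ (G (zbar + d)) := by
    filter_upwards [Metric.closedBall_mem_nhds (0 : EuclideanSpace ℝ (Fin n)) hδ] with d hd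
    simpa [add_sub_cancel_left] using hgrowth (zbar + d) (by simpa using hd)
  have hlocal := eventually_growth_of_isLittleO_sub (half_lt_self hβ) hgrowth_near hsub
  refine ⟨β / 2, half_pos hβ, fun d => ?_⟩
  simpa [φ] using hφ.add_mul_norm_le_of_eventually (x := 0) (by simpa using hlocal) d
end

section
/- (Superlinear convergence, unconstrained core.) Let ψ : ℝ^m → ℝ be convex and Lipschitz continuous with constant L, and let G : ℝ^n → ℝ^m be continuously differentiable with derivative G'(z) at z. Let {z^k} be a sequence in ℝ^n converging to z̄, and suppose: (i) growth at z̄: there exists γ > 0 with ψ(G(z̄) + G'(z̄) d) ≥ ψ(G(z̄)) + γ ‖d‖ for all d ∈ ℝ^n; and (ii) optimality of each step: for every k and every d ∈ ℝ^n, ψ(G(z^k) + G'(z^k)(z^{k+1} − z^k)) ≤ ψ(G(z^k) + G'(z^k) d). Then convergence is superlinear: ‖z^{k+1} − z̄‖ = o(‖z^k − z̄‖) as k → ∞, i.e. the sequence k ↦ ‖z^{k+1} − z̄‖ is little-o of k ↦ ‖z^k − z̄‖ along the at-top filter on ℕ. -/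
/-!
Comparing the step with the competitor `d = z̄ - zᵏ` and using the Lipschitz continuity of `ψ`
twice, the growth condition gives
`γ ‖zᵏ⁺¹ - z̄‖ ≤ 2L ‖G zᵏ - G z̄ - G'(zᵏ)(zᵏ - z̄)‖ + L ‖G'(z̄) - G'(zᵏ)‖ ‖zᵏ⁺¹ - z̄‖`.
The last coefficient tends to `0` by continuity of `G'`, so `‖zᵏ⁺¹ - z̄‖` is eventually bounded
by a multiple of the remainder `G zᵏ - G z̄ - G'(zᵏ)(zᵏ - z̄)`, which is `o(‖zᵏ - z̄‖)`.
-/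

open Filter Topology Asymptotics

section

variable {α 𝕜 E F : Type*} [NontriviallyNormedField 𝕜] [NormedAddCommGroup E] [NormedSpace 𝕜 E]
  [NormedAddCommGroup F] [NormedSpace 𝕜 F]

theorem ContinuousLinearMap.isLittleO_sub_apply_of_tendsto {l : Filter α} {A : α → E →L[𝕜] F}
    {f' : E →L[𝕜] F} (hA : Tendsto A l (𝓝 f')) (b : α → E) :
    (fun k => (A k - f') (b k)) =o[l] b := by
  refine isLittleO_iff.2 fun c hc => ?_
  filter_upwards [(tendsto_iff_norm_sub_tendsto_zero.1 hA).eventually (ge_mem_nhds hc)]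
    with k hk
  exact ((A k - f').le_opNorm (b k)).trans (by gcongr)

theorem ContDiffAt.isLittleO_sub_fderiv_apply {l : Filter α} {G : E → F} {x₀ : E}
    (hG : ContDiffAt 𝕜 1 G x₀) {x : α → E} (hx : Tendsto x l (𝓝 x₀)) :
    (fun k => G (x k) - G x₀ - fderiv 𝕜 G (x k) (x k - x₀)) =o[l] fun k => x k - x₀ := by
  have hlin : (fun k => G (x k) - G x₀ - fderiv 𝕜 G x₀ (x k - x₀)) =o[l] fun k => x k - x₀ :=
    (hG.differentiableAt one_ne_zero).hasFDerivAt.isLittleO.comp_tendsto hx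
  have hderiv := ContinuousLinearMap.isLittleO_sub_apply_of_tendsto
    ((hG.continuousAt_fderiv one_ne_zero).tendsto.comp hx) fun k => x k - x₀
  refine (hlin.sub hderiv).congr_left fun k => ?_
  simp only [Function.comp_apply, sub_apply]
  abel

theorem LipschitzWith.linearization_step_le {ψ : F → ℝ} {L : NNReal} (hψ : LipschitzWith L ψ)
    (G : E → F) (A f' : E →L[𝕜] F) {x x' x₀ : E}
    (hopt : ψ (G x + A (x' - x)) ≤ ψ (G x + A (x₀ - x))) :
    ψ (G x₀ + f' (x' - x₀)) ≤
      ψ (G x₀) + L * (2 * ‖G x - G x₀ - A (x - x₀)‖ + ‖f' - A‖ * ‖x' - x₀‖) := by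
  set s := G x - G x₀ - A (x - x₀)
  have hr : G x₀ + f' (x' - x₀) - (G x + A (x' - x)) = -s + (f' - A) (x' - x₀) := by
    simp only [s, map_sub, sub_apply]
    abel
  have hs : G x + A (x₀ - x) - G x₀ = s := by
    simp only [s, map_sub]
    abel
  have hr_le : ‖G x₀ + f' (x' - x₀) - (G x + A (x' - x))‖ ≤ ‖s‖ + ‖f' - A‖ * ‖x' - x₀‖ := by
    rw [hr]
    exact (norm_add_le _ _).trans (by rw [norm_neg]; gcongr; exact (f' - A).le_opNorm _)
  calc ψ (G x₀ + f' (x' - x₀))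
      ≤ ψ (G x + A (x' - x)) + L * ‖G x₀ + f' (x' - x₀) - (G x + A (x' - x))‖ := by
        simpa only [dist_eq_norm] using hψ.le_add_mul _ _
    _ ≤ ψ (G x + A (x₀ - x)) + L * (‖s‖ + ‖f' - A‖ * ‖x' - x₀‖) := by gcongr
    _ ≤ ψ (G x₀) + L * ‖s‖ + L * (‖s‖ + ‖f' - A‖ * ‖x' - x₀‖) := by
        gcongr
        have h := hψ.le_add_mul (G x + A (x₀ - x)) (G x₀)
        rwa [dist_eq_norm, hs] at h
    _ = ψ (G x₀) + L * (2 * ‖s‖ + ‖f' - A‖ * ‖x' - x₀‖) := by ring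

end

theorem Asymptotics.isBigO_of_mul_norm_le_add {α E F : Type*} [SeminormedAddGroup E] [Norm F]
    {l : Filter α} {a : α → E} {s : α → F} {ε : α → ℝ} {γ C : ℝ} (hγ : 0 < γ) (hε : Tendsto ε l (𝓝 0))
    (h : ∀ᶠ k in l, γ * ‖a k‖ ≤ C * ‖s k‖ + ε k * ‖a k‖) : a =O[l] s := by
  refine IsBigO.of_bound (2 * C / γ) ?_
  filter_upwards [h, hε.eventually (ge_mem_nhds (half_pos hγ))] with k hk hεk
  rw [div_mul_eq_mul_div, le_div_iff₀ hγ]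
  nlinarith [norm_nonneg (a k)]

theorem stmt15_general {n m : ℕ} (L : NNReal) (ψ : EuclideanSpace ℝ (Fin m) → ℝ)
    (hψL : LipschitzWith L ψ)
    (G : EuclideanSpace ℝ (Fin n) → EuclideanSpace ℝ (Fin m)) (hG : ContDiff ℝ 1 G)
    (z : ℕ → EuclideanSpace ℝ (Fin n)) (zbar : EuclideanSpace ℝ (Fin n))
    (hz : Tendsto z atTop (𝓝 zbar))
    (γ : ℝ) (hγ : 0 < γ)
    (hgrowth : ∀ d : EuclideanSpace ℝ (Fin n),
      ψ (G zbar + fderiv ℝ G zbar d) ≥ ψ (G zbar) + γ * ‖d‖)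
    (hopt : ∀ k : ℕ, ∀ d : EuclideanSpace ℝ (Fin n),
      ψ (G (z k) + fderiv ℝ G (z k) (z (k + 1) - z k)) ≤ ψ (G (z k) + fderiv ℝ G (z k) d)) :
    (fun k => ‖z (k + 1) - zbar‖) =o[atTop] fun k => ‖z k - zbar‖ := by
  have hderiv : Tendsto (fun k => fderiv ℝ G (z k)) atTop (𝓝 (fderiv ℝ G zbar)) :=
    (hG.continuous_fderiv one_ne_zero).continuousAt.tendsto.comp hz
  have hgap : Tendsto (fun k => L * ‖fderiv ℝ G zbar - fderiv ℝ G (z k)‖) atTop (𝓝 0) := by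
    simpa only [norm_sub_rev, mul_zero] using
      (tendsto_iff_norm_sub_tendsto_zero.1 hderiv).const_mul (L : ℝ)
  have hstep : ∀ k, γ * ‖z (k + 1) - zbar‖ ≤
      2 * L * ‖G (z k) - G zbar - fderiv ℝ G (z k) (z k - zbar)‖ +
        L * ‖fderiv ℝ G zbar - fderiv ℝ G (z k)‖ * ‖z (k + 1) - zbar‖ := fun k => by
    have hlin := hψL.linearization_step_le G (fderiv ℝ G (z k)) (fderiv ℝ G zbar)
      (hopt k (zbar - z k))
    linarith [hgrowth (z (k + 1) - zbar)]
  exact isLittleO_norm_norm.2 <| (isBigO_of_mul_norm_le_add hγ hgap (.of_forall hstep)).trans_isLittleO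
    (hG.contDiffAt.isLittleO_sub_fderiv_apply hz)

theorem stmt15 {n m : ℕ} (L : NNReal) (ψ : EuclideanSpace ℝ (Fin m) → ℝ)
    (hψc : ConvexOn ℝ Set.univ ψ) (hψL : LipschitzWith L ψ)
    (G : EuclideanSpace ℝ (Fin n) → EuclideanSpace ℝ (Fin m)) (hG : ContDiff ℝ 1 G)
    (z : ℕ → EuclideanSpace ℝ (Fin n)) (zbar : EuclideanSpace ℝ (Fin n))
    (hz : Tendsto z atTop (𝓝 zbar))
    (γ : ℝ) (hγ : 0 < γ)
    (hgrowth : ∀ d : EuclideanSpace ℝ (Fin n),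
      ψ (G zbar + fderiv ℝ G zbar d) ≥ ψ (G zbar) + γ * ‖d‖)
    (hopt : ∀ k : ℕ, ∀ d : EuclideanSpace ℝ (Fin n),
      ψ (G (z k) + fderiv ℝ G (z k) (z (k + 1) - z k)) ≤ ψ (G (z k) + fderiv ℝ G (z k) d)) :
    (fun k => ‖z (k + 1) - zbar‖) =o[atTop] fun k => ‖z k - zbar‖ :=
  stmt15_general L ψ hψL G hG z zbar hz γ hγ hgrowth hopt
end
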